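/- Let a be weakly degenerate at x₀ ∈ (0,1). Then the spaces H¹_{1/a}(0,1) and H¹(0,1) coincide algebraically (in particular every u ∈ H¹(0,1) satisfies ∫₀¹ u²/a dx < ∞), and the two norms are equivalent: there exists C ≥ 1 such that for all u ∈ H¹(0,1), (1/C)(∫₀¹ u² dx + ∫₀¹ (u')² dx) ≤ ∫₀¹ u²/a dx + ∫₀¹ (u')² dx ≤ C (∫₀¹ u² dx + ∫₀¹ (u')² dx). -/

import Mathlib

open MeasureTheory Set Filter

noncomputable section

/-- Absolute continuity of `u` on `[c,d]`, encoded via the fundamental theorem of calculus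
with an integrable derivative. -/
def ACOn (u : ℝ → ℝ) (c d : ℝ) : Prop :=
  IntervalIntegrable (deriv u) volume c d ∧
    ∀ x ∈ Icc c d, u x = u c + ∫ t in c..x, deriv u t

/-- Membership in `H¹(0,1)`. -/
def MemH1 (u : ℝ → ℝ) : Prop :=
  ACOn u 0 1 ∧ IntegrableOn (fun x => (u x)^2) (Ioo 0 1) ∧
    IntegrableOn (fun x => (deriv u x)^2) (Ioo 0 1)

/-- `a ∈ W^{1,1}(0,1)`. -/
def W11 (a : ℝ → ℝ) : Prop := ACOn a 0 1

/-- `a ∈ W^{1,∞}(0,1)`. -/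
def W1infty (a : ℝ → ℝ) : Prop :=
  ACOn a 0 1 ∧ ∃ M : ℝ, ∀ᵐ x ∂(volume.restrict (Icc (0:ℝ) 1)), |deriv a x| ≤ M

/-- Common part of the degeneracy conditions at `x₀` with constant `K`. -/
def DegAt (a : ℝ → ℝ) (x₀ K : ℝ) : Prop :=
  x₀ ∈ Ioo (0:ℝ) 1 ∧ a x₀ = 0 ∧ (∀ x ∈ Icc (0:ℝ) 1, x ≠ x₀ → 0 < a x) ∧
    ∀ᵐ x ∂(volume.restrict (Icc (0:ℝ) 1)), (x - x₀) * deriv a x ≤ K * a x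

/-- `a` is weakly degenerate at `x₀` with constant `K`. -/
def WeaklyDeg (a : ℝ → ℝ) (x₀ K : ℝ) : Prop :=
  DegAt a x₀ K ∧ W11 a ∧ K ∈ Ioo (0:ℝ) 1

/-- `a` is strongly degenerate at `x₀` with constant `K`. -/
def StronglyDeg (a : ℝ → ℝ) (x₀ K : ℝ) : Prop :=
  DegAt a x₀ K ∧ W1infty a ∧ K ∈ Ico (1:ℝ) 2

/-- Weakly (`wk = true`) or strongly (`wk = false`) degenerate. -/
def Deg (a : ℝ → ℝ) (x₀ K : ℝ) (wk : Bool) : Prop :=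
  cond wk (WeaklyDeg a x₀ K) (StronglyDeg a x₀ K)

/-- `H¹_a(0,1)` in the weakly degenerate case: absolutely continuous on `[0,1]`
with `√a · u' ∈ L²(0,1)`. -/
def MemH1aWeak (a u : ℝ → ℝ) : Prop :=
  ACOn u 0 1 ∧ IntegrableOn (fun x => a x * (deriv u x)^2) (Ioo 0 1)

/-- Locally absolutely continuous on `[0,x₀) ∪ (x₀,1]`. -/
def LocACAway (u : ℝ → ℝ) (x₀ : ℝ) : Prop :=
  (∀ c d : ℝ, 0 ≤ c → c ≤ d → d < x₀ → ACOn u c d) ∧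
  (∀ c d : ℝ, x₀ < c → c ≤ d → d ≤ 1 → ACOn u c d)

/-- `H¹_a(0,1)` in the strongly degenerate case. -/
def MemH1aStrong (a u : ℝ → ℝ) (x₀ : ℝ) : Prop :=
  IntegrableOn (fun x => (u x)^2) (Ioo 0 1) ∧ LocACAway u x₀ ∧
    IntegrableOn (fun x => a x * (deriv u x)^2) (Ioo 0 1)

/-- `H¹_a(0,1)`, weak (`wk = true`) or strong (`wk = false`) version. -/
def MemH1a (a u : ℝ → ℝ) (x₀ : ℝ) (wk : Bool) : Prop :=
  cond wk (MemH1aWeak a u) (MemH1aStrong a u x₀)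

/-- `H²_a(0,1) = {u ∈ H¹_a(0,1) : a u' ∈ H¹(0,1)}`. -/
def MemH2a (a u : ℝ → ℝ) (x₀ : ℝ) (wk : Bool) : Prop :=
  MemH1a a u x₀ wk ∧ ACOn (fun x => a x * deriv u x) 0 1 ∧
    IntegrableOn (fun x => (deriv (fun y => a y * deriv u y) x)^2) (Ioo 0 1)

/-- `D(A₁) = {u ∈ H²_a(0,1) : u'(0) = u'(1) = 0}`. -/
def MemDA1 (a u : ℝ → ℝ) (x₀ : ℝ) (wk : Bool) : Prop :=
  MemH2a a u x₀ wk ∧ deriv u 0 = 0 ∧ deriv u 1 = 0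

/-- `L²_{1/a}(0,1)`. -/
def MemL2inva (a u : ℝ → ℝ) : Prop :=
  IntegrableOn (fun x => (u x)^2) (Ioo 0 1) ∧
    IntegrableOn (fun x => (u x)^2 / a x) (Ioo 0 1)

/-- `H¹_{1/a}(0,1) = L²_{1/a}(0,1) ∩ H¹(0,1)`. -/
def MemH1inva (a u : ℝ → ℝ) : Prop :=
  MemL2inva a u ∧ ACOn u 0 1 ∧ IntegrableOn (fun x => (deriv u x)^2) (Ioo 0 1)

/-- `H²_{1/a}(0,1) = {u ∈ H¹_{1/a}(0,1) : u' ∈ H¹(0,1)}` (then `a u'' ∈ L²_{1/a}`). -/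
def MemH2inva (a u : ℝ → ℝ) : Prop :=
  MemH1inva a u ∧ ACOn (deriv u) 0 1 ∧
    IntegrableOn (fun x => a x * (deriv (deriv u) x)^2) (Ioo 0 1)

/-- `D(A₂) = {u ∈ H²_{1/a}(0,1) : u'(0) = u'(1) = 0}`. -/
def MemDA2 (a u : ℝ → ℝ) : Prop :=
  MemH2inva a u ∧ deriv u 0 = 0 ∧ deriv u 1 = 0

/-- The time weight `Θ(t) = 1/(t(T-t))⁴`. -/
def Theta (T t : ℝ) : ℝ := 1 / (t * (T - t))^4

/-- The space weight `ψ(x) = c₁ (∫_{x₀}^x (y-x₀)/a(y) dy − c₂)`. -/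
def psiW (a : ℝ → ℝ) (x₀ c₁ c₂ x : ℝ) : ℝ :=
  c₁ * ((∫ y in x₀..x, (y - x₀) / a y) - c₂)

/-- The weight `φ(t,x) = Θ(t) ψ(x)`. -/
def phiW (a : ℝ → ℝ) (x₀ c₁ c₂ T t x : ℝ) : ℝ := Theta T t * psiW a x₀ c₁ c₂ x

/-- The space weight `μ(x) = d₁ (∫_{x₀}^x (y-x₀)e^{R(y-x₀)²}/a(y) dy − d₂)`. -/
def muW (a : ℝ → ℝ) (x₀ d₁ d₂ R x : ℝ) : ℝ :=
  d₁ * ((∫ y in x₀..x, (y - x₀) * Real.exp (R * (y - x₀)^2) / a y) - d₂)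

/-- The weight `γ(t,x) = Θ(t) μ(x)`. -/
def gammaW (a : ℝ → ℝ) (x₀ d₁ d₂ R T t x : ℝ) : ℝ := Theta T t * muW a x₀ d₁ d₂ R x

/-- Hypotheses (A) of the divergence-form Carleman estimate. -/
def HypA (a : ℝ → ℝ) (x₀ K : ℝ) (wk : Bool) : Prop :=
  cond wk
    (WeaklyDeg a x₀ K ∧ ContDiffOn ℝ 1 a (Icc 0 1 \ {x₀}))
    (StronglyDeg a x₀ K ∧
      (4/3 < K → ∃ ϑ, ϑ ∈ Ioc (0:ℝ) K ∧
        AntitoneOn (fun x => a x / |x - x₀| ^ ϑ) (Ico 0 x₀) ∧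
        MonotoneOn (fun x => a x / |x - x₀| ^ ϑ) (Ioc x₀ 1) ∧
        (3/2 < K →
          (∃ ε > 0, ∀ x ∈ Icc (0:ℝ) 1, x ≠ x₀ → ε ≤ a x / |x - x₀| ^ ϑ) ∧
          ∃ S > 0, ∀ᵐ x ∂(volume.restrict (Icc (0:ℝ) 1)),
            |deriv a x| ≤ S * |x - x₀| ^ (2*ϑ - 3))))

/-- Hypotheses (B) of the non-divergence-form Carleman estimate. -/
def HypB (a : ℝ → ℝ) (x₀ K : ℝ) (wk : Bool) : Prop :=
  Deg a x₀ K wk ∧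
  (∃ L : NNReal, LipschitzOnWith L (fun x => (x - x₀) * deriv a x / a x) (Icc 0 1)) ∧
  (1/2 ≤ K → ∃ ϑ, ϑ ∈ Ioc (0:ℝ) K ∧
      AntitoneOn (fun x => a x / |x - x₀| ^ ϑ) (Ico 0 x₀) ∧
      MonotoneOn (fun x => a x / |x - x₀| ^ ϑ) (Ioc x₀ 1))

/-- `g ∈ L^∞_loc([0,1] ∖ {x₀})`. -/
def LocBddAway (g : ℝ → ℝ) (x₀ : ℝ) : Prop :=
  ∀ c d : ℝ, Icc c d ⊆ Icc (0:ℝ) 1 \ {x₀} →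
    ∃ M : ℝ, ∀ x ∈ Icc c d, |g x| ≤ M

/-- `h ∈ W^{1,∞}_loc([0,1] ∖ {x₀}; L^∞(0,1))`. -/
def LocW1inftyAway (h : ℝ → ℝ → ℝ) (x₀ : ℝ) : Prop :=
  ∀ c d : ℝ, Icc c d ⊆ Icc (0:ℝ) 1 \ {x₀} →
    (∃ M : ℝ, ∀ x ∈ Icc c d, ∀ B ∈ Icc (0:ℝ) 1, |h x B| ≤ M) ∧
    ∃ L : NNReal, ∀ B ∈ Icc (0:ℝ) 1, LipschitzOnWith L (fun x => h x B) (Icc c d)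

/-- Hypothesis (O) (with `σ = -1`) resp. (O') (with `σ = 1`):
`σ (a'/(2√a))(∫ₓᴮ g + h₀) + √a g = h(x,B)` for a.e. `x` and all admissible `B`. -/
def HypOgen (σ : ℝ) (a g : ℝ → ℝ) (h : ℝ → ℝ → ℝ) (g₀ h₀ x₀ : ℝ) : Prop :=
  0 < g₀ ∧ 0 < h₀ ∧
  (∀ᵐ x ∂(volume.restrict (Icc (0:ℝ) 1)), g₀ ≤ g x) ∧
  LocBddAway g x₀ ∧ LocW1inftyAway h x₀ ∧
  ∀ᵐ x ∂(volume.restrict (Icc (0:ℝ) 1)), ∀ B ∈ Icc (0:ℝ) 1,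
    ((x < B ∧ B < x₀) ∨ (x₀ < x ∧ x < B)) →
      σ * (deriv a x / (2 * Real.sqrt (a x))) * ((∫ t in x..B, g t) + h₀)
        + Real.sqrt (a x) * g x = h x B

/-- The space-time cylinder `Q_T = (0,T) × (0,1)`. -/
def QT (T : ℝ) : Set (ℝ × ℝ) := Ioo 0 T ×ˢ Ioo (0:ℝ) 1

/-- The class `𝒱 = L²(0,T; D(A₁)) ∩ H¹(0,T; H¹_a(0,1))`. -/
def InClassV (a : ℝ → ℝ) (x₀ T : ℝ) (wk : Bool) (v : ℝ → ℝ → ℝ) : Prop :=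
  (∀ t ∈ Ioo (0:ℝ) T, MemDA1 a (v t) x₀ wk) ∧
  IntegrableOn (fun p : ℝ × ℝ =>
    (v p.1 p.2)^2 + a p.2 * (deriv (v p.1) p.2)^2
      + (deriv (fun y => a y * deriv (v p.1) y) p.2)^2) (QT T) ∧
  IntegrableOn (fun p : ℝ × ℝ =>
    (deriv (fun τ => v τ p.2) p.1)^2
      + a p.2 * (deriv (fun y => deriv (fun τ => v τ y) p.1) p.2)^2) (QT T)

/-- The class `𝒮 = H¹(0,T; H¹_{1/a}(0,1)) ∩ L²(0,T; H²_{1/a}(0,1))`. -/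
def InClassS (a : ℝ → ℝ) (T : ℝ) (v : ℝ → ℝ → ℝ) : Prop :=
  (∀ t ∈ Ioo (0:ℝ) T, MemH2inva a (v t)) ∧
  IntegrableOn (fun p : ℝ × ℝ =>
    (v p.1 p.2)^2 / a p.2 + (deriv (v p.1) p.2)^2
      + a p.2 * (deriv (deriv (v p.1)) p.2)^2) (QT T) ∧
  IntegrableOn (fun p : ℝ × ℝ =>
    (deriv (fun τ => v τ p.2) p.1)^2 / a p.2
      + (deriv (fun y => deriv (fun τ => v τ y) p.1) p.2)^2) (QT T)

/-- Neumann boundary conditions `v_x(t,0) = v_x(t,1) = 0` for `t ∈ (0,T)`. -/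
def NeumannBC (T : ℝ) (v : ℝ → ℝ → ℝ) : Prop :=
  ∀ t ∈ Ioo (0:ℝ) T, deriv (v t) 0 = 0 ∧ deriv (v t) 1 = 0

/-- The equation `v_t + (a v_x)_x = h` in `Q_T`. -/
def SolDiv (a : ℝ → ℝ) (T : ℝ) (v h : ℝ → ℝ → ℝ) : Prop :=
  ∀ t ∈ Ioo (0:ℝ) T, ∀ x ∈ Ioo (0:ℝ) 1,
    deriv (fun τ => v τ x) t + deriv (fun y => a y * deriv (v t) y) x = h t x

/-- The equation `v_t + a v_xx = h` in `Q_T`. -/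
def SolNonDiv (a : ℝ → ℝ) (T : ℝ) (v h : ℝ → ℝ → ℝ) : Prop :=
  ∀ t ∈ Ioo (0:ℝ) T, ∀ x ∈ Ioo (0:ℝ) 1,
    deriv (fun τ => v τ x) t + a x * deriv (deriv (v t)) x = h t x

/-- Test function class `H¹(0,T; L²(0,1)) ∩ L²(0,T; H¹_a(0,1))` for the weak formulation
in divergence form. -/
def TestClassDiv (a : ℝ → ℝ) (x₀ T : ℝ) (wk : Bool) (φ : ℝ → ℝ → ℝ) : Prop :=
  (∀ t ∈ Icc (0:ℝ) T, MemH1a a (φ t) x₀ wk) ∧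
  IntegrableOn (fun p : ℝ × ℝ =>
    (φ p.1 p.2)^2 + a p.2 * (deriv (φ p.1) p.2)^2
      + (deriv (fun τ => φ τ p.2) p.1)^2) (QT T)

/-- Weak solution of `v_t + (a v_x)_x = 0` with Neumann boundary conditions. -/
def WeakSolDiv (a : ℝ → ℝ) (x₀ T : ℝ) (wk : Bool) (v : ℝ → ℝ → ℝ) : Prop :=
  (∀ t ∈ Icc (0:ℝ) T, MemH1a a (v t) x₀ wk) ∧
  IntegrableOn (fun p : ℝ × ℝ =>
    (v p.1 p.2)^2 + a p.2 * (deriv (v p.1) p.2)^2) (QT T) ∧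
  ∀ φ : ℝ → ℝ → ℝ, TestClassDiv a x₀ T wk φ →
    (∫ x in Ioo (0:ℝ) 1, v T x * φ T x) - (∫ x in Ioo (0:ℝ) 1, v 0 x * φ 0 x)
      - (∫ t in Ioo (0:ℝ) T, ∫ x in Ioo (0:ℝ) 1, v t x * deriv (fun τ => φ τ x) t)
      = ∫ t in Ioo (0:ℝ) T, ∫ x in Ioo (0:ℝ) 1, a x * deriv (v t) x * deriv (φ t) x

/-- Test function class `H¹(0,T; L²_{1/a}(0,1)) ∩ L²(0,T; H¹_{1/a}(0,1))` for the weak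
formulation in non-divergence form. -/
def TestClassNonDiv (a : ℝ → ℝ) (T : ℝ) (φ : ℝ → ℝ → ℝ) : Prop :=
  (∀ t ∈ Icc (0:ℝ) T, MemH1inva a (φ t)) ∧
  IntegrableOn (fun p : ℝ × ℝ =>
    (φ p.1 p.2)^2 / a p.2 + (deriv (φ p.1) p.2)^2
      + (deriv (fun τ => φ τ p.2) p.1)^2 / a p.2) (QT T)

/-- Weak solution of `v_t + a v_xx = 0` with Neumann boundary conditions. -/
def WeakSolNonDiv (a : ℝ → ℝ) (T : ℝ) (v : ℝ → ℝ → ℝ) : Prop :=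
  (∀ t ∈ Icc (0:ℝ) T, MemH1inva a (v t)) ∧
  IntegrableOn (fun p : ℝ × ℝ =>
    (v p.1 p.2)^2 / a p.2 + (deriv (v p.1) p.2)^2) (QT T) ∧
  ∀ φ : ℝ → ℝ → ℝ, TestClassNonDiv a T φ →
    (∫ x in Ioo (0:ℝ) 1, v T x * φ T x / a x) - (∫ x in Ioo (0:ℝ) 1, v 0 x * φ 0 x / a x)
      - (∫ t in Ioo (0:ℝ) T, ∫ x in Ioo (0:ℝ) 1, v t x * deriv (fun τ => φ τ x) t / a x)
      = ∫ t in Ioo (0:ℝ) T, ∫ x in Ioo (0:ℝ) 1, deriv (v t) x * deriv (φ t) x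

end

/-! The condition `(x - x₀) a' ≤ K a` says that `a / |x - x₀| ^ K` decreases as `x` moves away
from `x₀` on either side (differentiate the product of the absolutely continuous `a` with
`|x - x₀| ^ (-K)`), so `a ≥ m |x - x₀| ^ K` on `[0,1]` for some `m > 0`. Since
`‖u‖²_∞ ≤ 2 ‖u‖²_{H¹}` (from `(u²)' = 2 u u' ≤ u² + u'²`), it follows that
`u² / a ≤ (2 / m) ‖u‖²_{H¹} |x - x₀| ^ (-K)`, which is integrable because `K < 1`.
Conversely `u² ≤ (sup a) · u² / a`. -/

theorem AbsolutelyContinuousOnInterval.congr {X : Type*} [PseudoMetricSpace X] {f g : ℝ → X}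
    {a b : ℝ} (hf : AbsolutelyContinuousOnInterval f a b) (hfg : EqOn f g (uIcc a b)) :
    AbsolutelyContinuousOnInterval g a b := by
  refine Tendsto.congr' ?_ hf
  filter_upwards [eventually_inf_principal.mpr (Eventually.of_forall fun _ h => h)] with E hE
  exact Finset.sum_congr rfl fun i hi => by rw [hfg (hE.1 i hi).1, hfg (hE.1 i hi).2]

namespace ACOn

variable {u : ℝ → ℝ} {c d : ℝ}

theorem absolutelyContinuousOnInterval (hu : ACOn u c d) (hcd : c ≤ d) :
    AbsolutelyContinuousOnInterval u c d := by
  have hprim := hu.1.absolutelyContinuousOnInterval_intervalIntegral left_mem_uIcc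
  refine ((LipschitzWith.const (u c)).lipschitzOnWith.absolutelyContinuousOnInterval.add
    hprim).congr fun x hx => ?_
  rw [uIcc_of_le hcd] at hx
  exact (hu.2 x hx).symm

theorem continuousOn (hu : ACOn u c d) (hcd : c ≤ d) : ContinuousOn u (Icc c d) := by
  simpa [uIcc_of_le hcd] using (hu.absolutelyContinuousOnInterval hcd).continuousOn

end ACOn

theorem AbsolutelyContinuousOnInterval.mul_le_mul_of_deriv_mul_nonneg {f g : ℝ → ℝ} {p q : ℝ}
    (hf : AbsolutelyContinuousOnInterval f p q) (hg : AbsolutelyContinuousOnInterval g p q)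
    (hpq : p ≤ q)
    (h : ∀ᵐ t ∂volume.restrict (Icc p q), 0 ≤ deriv f t * g t + f t * deriv g t) :
    f p * g p ≤ f q * g q :=
  sub_nonneg.1 <| hf.integral_deriv_mul_eq_sub hg ▸
    intervalIntegral.integral_nonneg_of_ae_restrict hpq h

theorem antitoneOn_div_rpow_sub_of_deriv_le {a : ℝ → ℝ} {x₀ b K : ℝ}
    (ha : AbsolutelyContinuousOnInterval a x₀ b)
    (hdeg : ∀ᵐ t ∂volume.restrict (Icc x₀ b), (t - x₀) * deriv a t ≤ K * a t) :
    AntitoneOn (fun t => a t / (t - x₀) ^ K) (Ioc x₀ b) := by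
  intro p hp q hq hpq
  have hpos : ∀ t ∈ Icc p q, 0 < t - x₀ := fun t ht => by linarith [hp.1, ht.1]
  have hg : ∀ t ∈ Icc p q,
      HasDerivAt (fun t => -(t - x₀) ^ (-K)) (-(1 * (-K) * (t - x₀) ^ (-K - 1))) t :=
    fun t ht => (((hasDerivAt_id t).sub_const x₀).rpow_const (Or.inl (hpos t ht).ne')).neg
  have hg_ac : AbsolutelyContinuousOnInterval (fun t => -(t - x₀) ^ (-K)) p q := by
    refine ContDiffOn.absolutelyContinuousOnInterval ?_
    rw [uIcc_of_le hpq]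
    exact ((contDiffOn_id.sub contDiffOn_const).rpow_const_of_ne
      fun t ht => (hpos t ht).ne').neg
  have ha_pq : AbsolutelyContinuousOnInterval a p q := ha.mono <| by
    rw [uIcc_of_le hpq, uIcc_of_le (hp.1.le.trans hp.2)]
    exact Icc_subset_Icc hp.1.le hq.2
  have key := ha_pq.mul_le_mul_of_deriv_mul_nonneg hg_ac hpq <| by
    filter_upwards [ae_restrict_of_ae_restrict_of_subset (Icc_subset_Icc hp.1.le hq.2) hdeg,
      ae_restrict_mem measurableSet_Icc] with t hdeg_t ht
    have hs := hpos t ht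
    rw [(hg t ht).deriv, Real.rpow_sub_one hs.ne']
    have : deriv a t * -(t - x₀) ^ (-K) + a t * -(1 * -K * ((t - x₀) ^ (-K) / (t - x₀)))
        = (t - x₀) ^ (-K) / (t - x₀) * (K * a t - (t - x₀) * deriv a t) := by
      field_simp; ring
    rw [this]
    exact mul_nonneg (div_nonneg (Real.rpow_nonneg hs.le _) hs.le) (sub_nonneg.2 hdeg_t)
  simp only [div_eq_mul_inv, ← Real.rpow_neg (hpos p (left_mem_Icc.2 hpq)).le,
    ← Real.rpow_neg (hpos q (right_mem_Icc.2 hpq)).le]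
  linarith

theorem monotoneOn_div_rpow_sub_of_deriv_le {a : ℝ → ℝ} {x₀ b K : ℝ}
    (ha : AbsolutelyContinuousOnInterval a b x₀)
    (hdeg : ∀ᵐ t ∂volume.restrict (Icc b x₀), (t - x₀) * deriv a t ≤ K * a t) :
    MonotoneOn (fun t => a t / (x₀ - t) ^ K) (Ico b x₀) := by
  intro p hp q hq hpq
  have hpos : ∀ t ∈ Icc p q, 0 < x₀ - t := fun t ht => by linarith [hq.2, ht.2]
  have hg : ∀ t ∈ Icc p q,
      HasDerivAt (fun t => (x₀ - t) ^ (-K)) (-1 * (-K) * (x₀ - t) ^ (-K - 1)) t :=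
    fun t ht => ((hasDerivAt_id t).const_sub x₀).rpow_const (Or.inl (hpos t ht).ne')
  have hg_ac : AbsolutelyContinuousOnInterval (fun t => (x₀ - t) ^ (-K)) p q := by
    refine ContDiffOn.absolutelyContinuousOnInterval ?_
    rw [uIcc_of_le hpq]
    exact (contDiffOn_const.sub contDiffOn_id).rpow_const_of_ne fun t ht => (hpos t ht).ne'
  have ha_pq : AbsolutelyContinuousOnInterval a p q := ha.mono <| by
    rw [uIcc_of_le hpq, uIcc_of_le (hq.1.trans hq.2.le)]
    exact Icc_subset_Icc hp.1 hq.2.le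
  have key := ha_pq.mul_le_mul_of_deriv_mul_nonneg hg_ac hpq <| by
    filter_upwards [ae_restrict_of_ae_restrict_of_subset (Icc_subset_Icc hp.1 hq.2.le) hdeg,
      ae_restrict_mem measurableSet_Icc] with t hdeg_t ht
    have hs := hpos t ht
    rw [(hg t ht).deriv, Real.rpow_sub_one hs.ne']
    have : deriv a t * (x₀ - t) ^ (-K) + a t * (-1 * -K * ((x₀ - t) ^ (-K) / (x₀ - t)))
        = (x₀ - t) ^ (-K) / (x₀ - t) * (K * a t - (t - x₀) * deriv a t) := by
      field_simp; ring
    rw [this]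
    exact mul_nonneg (div_nonneg (Real.rpow_nonneg hs.le _) hs.le) (sub_nonneg.2 hdeg_t)
  simpa only [div_eq_mul_inv, ← Real.rpow_neg (hpos p (left_mem_Icc.2 hpq)).le,
    ← Real.rpow_neg (hpos q (right_mem_Icc.2 hpq)).le] using key

theorem intervalIntegrable_abs_rpow {r : ℝ} (hr : -1 < r) (a b : ℝ) :
    IntervalIntegrable (fun x => |x| ^ r) volume a b := by
  have hnonneg : ∀ c, 0 ≤ c → IntervalIntegrable (fun x => |x| ^ r) volume 0 c := fun c hc =>
    (intervalIntegral.intervalIntegrable_rpow' hr).congr fun x hx => by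
      rw [uIoc_of_le hc] at hx
      simp only [abs_of_pos hx.1]
  have hzero : ∀ c, IntervalIntegrable (fun x => |x| ^ r) volume 0 c := fun c => by
    rcases le_total 0 c with hc | hc
    · exact hnonneg c hc
    · rw [IntervalIntegrable.iff_comp_neg]
      simpa only [abs_neg, neg_zero] using hnonneg (-c) (neg_nonneg.2 hc)
  exact (hzero a).symm.trans (hzero b)

theorem integral_le_mul_integral_div {α : Type*} [MeasurableSpace α] {μ : Measure α}
    {f w : α → ℝ} {M : ℝ} (hf : 0 ≤ᵐ[μ] f) (hfw : Integrable (fun x => f x / w x) μ)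
    (hw : ∀ᵐ x ∂μ, 0 < w x ∧ w x ≤ M) :
    ∫ x, f x ∂μ ≤ M * ∫ x, f x / w x ∂μ := by
  rw [← integral_const_mul]
  refine integral_mono_of_nonneg hf (hfw.const_mul M) ?_
  filter_upwards [hf, hw] with x hfx hwx
  calc f x = w x * (f x / w x) := by field_simp [hwx.1.ne']
    _ ≤ M * (f x / w x) := mul_le_mul_of_nonneg_right hwx.2 (div_nonneg hfx hwx.1.le)

namespace MemH1

variable {u : ℝ → ℝ}

theorem sq_sub_sq_le (hu : MemH1 u) {x y : ℝ} (hx : x ∈ Icc (0:ℝ) 1) (hy : y ∈ Icc (0:ℝ) 1) :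
    u x ^ 2 - u y ^ 2 ≤ (∫ t in Ioo (0:ℝ) 1, u t ^ 2) + ∫ t in Ioo (0:ℝ) 1, deriv u t ^ 2 := by
  have hsub : uIcc y x ⊆ uIcc 0 1 := by
    rw [uIcc_of_le zero_le_one]
    exact uIcc_subset_Icc hy hx
  have hac : AbsolutelyContinuousOnInterval u y x :=
    (hu.1.absolutelyContinuousOnInterval zero_le_one).mono hsub
  have hint : IntegrableOn (fun t => u t ^ 2 + deriv u t ^ 2) (Ioc 0 1) :=
    (integrableOn_Ioc_iff_integrableOn_Ioo).2 (hu.2.1.add hu.2.2)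
  have hsub' : uIoc y x ⊆ Ioc 0 1 := by
    simpa [uIoc_of_le zero_le_one] using uIoc_subset_uIoc_of_uIcc_subset_uIcc hsub
  calc u x ^ 2 - u y ^ 2 = ∫ t in y..x, deriv u t * u t + u t * deriv u t := by
        rw [hac.integral_deriv_mul_eq_sub hac]; ring
    _ ≤ ∫ t in uIoc y x, |deriv u t * u t + u t * deriv u t| := (le_abs_self _).trans <| by
        simpa only [Real.norm_eq_abs] using intervalIntegral.norm_integral_le_integral_norm_uIoc
          (f := fun t => deriv u t * u t + u t * deriv u t) (μ := volume)
    _ ≤ ∫ t in uIoc y x, u t ^ 2 + deriv u t ^ 2 := by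
        refine integral_mono_of_nonneg (ae_of_all _ fun _ => abs_nonneg _)
          (hint.mono_set hsub') (ae_of_all _ fun t => ?_)
        simp only [abs_le]
        constructor <;> nlinarith [sq_nonneg (u t + deriv u t), sq_nonneg (u t - deriv u t)]
    _ ≤ ∫ t in Ioc 0 1, u t ^ 2 + deriv u t ^ 2 :=
        setIntegral_mono_set hint (ae_of_all _ fun _ => by positivity) hsub'.eventuallyLE
    _ = _ := by rw [integral_Ioc_eq_integral_Ioo, integral_add hu.2.1 hu.2.2]

theorem sq_le (hu : MemH1 u) {x : ℝ} (hx : x ∈ Icc (0:ℝ) 1) :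
    u x ^ 2 ≤ 2 * ((∫ t in Ioo (0:ℝ) 1, u t ^ 2) + ∫ t in Ioo (0:ℝ) 1, deriv u t ^ 2) := by
  set I₁ := ∫ t in Ioo (0:ℝ) 1, u t ^ 2
  set I₂ := ∫ t in Ioo (0:ℝ) 1, deriv u t ^ 2
  have hI₂ : 0 ≤ I₂ := by positivity
  have hmono := setIntegral_mono_on (integrableOn_const (C := u x ^ 2 - (I₁ + I₂))
    measure_Ioo_lt_top.ne)
    hu.2.1 measurableSet_Ioo fun y hy => by
      linarith [hu.sq_sub_sq_le hx (Ioo_subset_Icc_self hy)]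
  rw [setIntegral_const, Real.volume_real_Ioo_of_le zero_le_one, sub_zero, one_smul] at hmono
  linarith

end MemH1

theorem WeaklyDeg.exists_pos_mul_rpow_le {a : ℝ → ℝ} {x₀ K : ℝ} (h : WeaklyDeg a x₀ K) :
    ∃ m > 0, ∀ x ∈ Icc (0:ℝ) 1, m * |x - x₀| ^ K ≤ a x := by
  obtain ⟨⟨hx₀, hax₀, hpos, hdeg⟩, hW, hK⟩ := h
  have hac := hW.absolutelyContinuousOnInterval zero_le_one
  have h0 : (0:ℝ) ∈ Icc 0 1 := left_mem_Icc.2 zero_le_one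
  have h1 : (1:ℝ) ∈ Icc 0 1 := right_mem_Icc.2 zero_le_one
  have hsub : ∀ {p q : ℝ}, p ∈ Icc (0:ℝ) 1 → q ∈ Icc (0:ℝ) 1 → uIcc p q ⊆ uIcc 0 1 :=
    fun hp hq => by rw [uIcc_of_le zero_le_one]; exact uIcc_subset_Icc hp hq
  have hx₀' := Ioo_subset_Icc_self hx₀
  have hleft := monotoneOn_div_rpow_sub_of_deriv_le (hac.mono (hsub h0 hx₀'))
    (ae_restrict_of_ae_restrict_of_subset (Icc_subset_Icc le_rfl hx₀.2.le) hdeg)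
  have hright := antitoneOn_div_rpow_sub_of_deriv_le (hac.mono (hsub hx₀' h1))
    (ae_restrict_of_ae_restrict_of_subset (Icc_subset_Icc hx₀.1.le le_rfl) hdeg)
  have ha₀ := hpos 0 h0 hx₀.1.ne
  have ha₁ := hpos 1 h1 hx₀.2.ne'
  refine ⟨min (a 0 / (x₀ - 0) ^ K) (a 1 / (1 - x₀) ^ K),
    lt_min (by simp only [sub_zero]; have := hx₀.1; positivity)
      (by have := sub_pos.2 hx₀.2; positivity), fun x hx => ?_⟩
  rcases lt_trichotomy x x₀ with hlt | rfl | hgt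
  · have hs : 0 < x₀ - x := sub_pos.2 hlt
    rw [abs_sub_comm, abs_of_pos hs, ← le_div_iff₀ (Real.rpow_pos_of_pos hs K)]
    exact (min_le_left _ _).trans (hleft ⟨le_rfl, hx₀.1⟩ ⟨hx.1, hlt⟩ hx.1)
  · rw [sub_self, abs_zero, Real.zero_rpow hK.1.ne', mul_zero, hax₀]
  · have hs : 0 < x - x₀ := sub_pos.2 hgt
    rw [abs_of_pos hs, ← le_div_iff₀ (Real.rpow_pos_of_pos hs K)]
    exact (min_le_right _ _).trans (hright ⟨hgt, hx.2⟩ ⟨hx₀.2, le_rfl⟩ hx.2)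

theorem MemH1.integrableOn_sq_div_and_integral_le {u a : ℝ → ℝ} {x₀ K m : ℝ} (hu : MemH1 u)
    (hK : K < 1) (hm : 0 < m) (ha : ContinuousOn a (Icc 0 1))
    (ha_low : ∀ x ∈ Icc (0:ℝ) 1, m * |x - x₀| ^ K ≤ a x) :
    IntegrableOn (fun x => u x ^ 2 / a x) (Ioo 0 1) ∧
      ∫ x in Ioo (0:ℝ) 1, u x ^ 2 / a x ≤ 2 / m * (∫ x in Ioo (0:ℝ) 1, |x - x₀| ^ (-K)) *
        ((∫ x in Ioo (0:ℝ) 1, u x ^ 2) + ∫ x in Ioo (0:ℝ) 1, deriv u x ^ 2) := by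
  set N := (∫ x in Ioo (0:ℝ) 1, u x ^ 2) + ∫ x in Ioo (0:ℝ) 1, deriv u x ^ 2
  have hN : 0 ≤ 2 * N := (sq_nonneg _).trans (hu.sq_le (left_mem_Icc.2 zero_le_one))
  have ha_nonneg : ∀ x ∈ Icc (0:ℝ) 1, 0 ≤ a x := fun x hx =>
    (by positivity : 0 ≤ m * |x - x₀| ^ K).trans (ha_low x hx)
  have hbound : ∀ᵐ x ∂volume.restrict (Ioo (0:ℝ) 1),
      ‖u x ^ 2 / a x‖ ≤ 2 * N / m * |x - x₀| ^ (-K) := by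
    filter_upwards [ae_restrict_mem measurableSet_Ioo,
      ae_restrict_of_ae (measure_eq_zero_iff_ae_notMem.1 (measure_singleton x₀))]
      with x hx hne
    have hx' := Ioo_subset_Icc_self hx
    have hd : 0 < |x - x₀| ^ K := Real.rpow_pos_of_pos (abs_pos.2 (sub_ne_zero.2 hne)) K
    rw [Real.norm_of_nonneg (div_nonneg (sq_nonneg _) (ha_nonneg x hx')),
      Real.rpow_neg (abs_nonneg _)]
    calc u x ^ 2 / a x ≤ 2 * N / (m * |x - x₀| ^ K) :=
          div_le_div₀ hN (hu.sq_le hx') (by positivity) (ha_low x hx')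
      _ = 2 * N / m * (|x - x₀| ^ K)⁻¹ := by field_simp
  have hmeas :
      AEStronglyMeasurable (fun x => u x ^ 2 / a x) (volume.restrict (Ioo 0 1)) := by
    have hcont : ∀ {f : ℝ → ℝ}, ContinuousOn f (Icc 0 1) →
        AEMeasurable f (volume.restrict (Ioo 0 1)) :=
      fun hf => (hf.mono Ioo_subset_Icc_self).aemeasurable measurableSet_Ioo
    exact (((hcont (hu.1.continuousOn zero_le_one)).pow_const 2).div
      (hcont ha)).aestronglyMeasurable
  have hdom : IntegrableOn (fun x => 2 * N / m * |x - x₀| ^ (-K)) (Ioo 0 1) := by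
    refine Integrable.const_mul ?_ _
    have := (intervalIntegrable_abs_rpow (neg_lt_neg hK) (0 - x₀) (1 - x₀)).comp_sub_right
      x₀
    rw [sub_add_cancel, sub_add_cancel] at this
    exact (intervalIntegrable_iff_integrableOn_Ioo_of_le zero_le_one).1 this
  refine ⟨hdom.mono' hmeas hbound, ?_⟩
  rw [show 2 / m * (∫ x in Ioo (0:ℝ) 1, |x - x₀| ^ (-K)) * N =
    2 * N / m * ∫ x in Ioo (0:ℝ) 1, |x - x₀| ^ (-K) by ring, ← integral_const_mul]
  exact integral_mono_of_nonneg
    (ae_restrict_of_forall_mem measurableSet_Ioo fun x hx =>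
      div_nonneg (sq_nonneg _) (ha_nonneg x (Ioo_subset_Icc_self hx)))
    hdom (hbound.mono fun x hx => (le_abs_self _).trans hx)

theorem WeaklyDeg.exists_integral_sq_le_mul_integral_sq_div {a : ℝ → ℝ} {x₀ K : ℝ}
    (h : WeaklyDeg a x₀ K) :
    ∃ M, ∀ u : ℝ → ℝ, IntegrableOn (fun x => u x ^ 2 / a x) (Ioo 0 1) →
      ∫ x in Ioo (0:ℝ) 1, u x ^ 2 ≤ M * ∫ x in Ioo (0:ℝ) 1, u x ^ 2 / a x := by
  obtain ⟨⟨-, -, hpos, -⟩, hW, -⟩ := h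
  obtain ⟨M, hM⟩ := isCompact_Icc.bddAbove_image (hW.continuousOn zero_le_one)
  refine ⟨M, fun u hu => integral_le_mul_integral_div (ae_of_all _ fun _ => sq_nonneg _) hu ?_⟩
  filter_upwards [ae_restrict_mem measurableSet_Ioo,
    ae_restrict_of_ae (measure_eq_zero_iff_ae_notMem.1 (measure_singleton x₀))] with x hx hne
  have hx' := Ioo_subset_Icc_self hx
  exact ⟨hpos x hx' hne, hM (mem_image_of_mem a hx')⟩

/-- In the weakly degenerate case `H¹_{1/a}(0,1) = H¹(0,1)` with equivalent norms. -/
theorem statement7 (a : ℝ → ℝ) (x₀ : ℝ) (ha : ∃ K, WeaklyDeg a x₀ K) :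
    (∀ u : ℝ → ℝ, MemH1 u → IntegrableOn (fun x => (u x)^2 / a x) (Ioo 0 1)) ∧
    ∃ C : ℝ, 1 ≤ C ∧ ∀ u : ℝ → ℝ, MemH1 u →
      ((1/C) * ((∫ x in Ioo (0:ℝ) 1, (u x)^2) + ∫ x in Ioo (0:ℝ) 1, (deriv u x)^2)
        ≤ (∫ x in Ioo (0:ℝ) 1, (u x)^2 / a x) + ∫ x in Ioo (0:ℝ) 1, (deriv u x)^2) ∧
      ((∫ x in Ioo (0:ℝ) 1, (u x)^2 / a x) + (∫ x in Ioo (0:ℝ) 1, (deriv u x)^2)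
        ≤ C * ((∫ x in Ioo (0:ℝ) 1, (u x)^2) + ∫ x in Ioo (0:ℝ) 1, (deriv u x)^2)) := by
  obtain ⟨K, hdeg⟩ := ha
  obtain ⟨m, hm, ha_low⟩ := hdeg.exists_pos_mul_rpow_le
  obtain ⟨M, hM⟩ := hdeg.exists_integral_sq_le_mul_integral_sq_div
  obtain ⟨-, hW, -, hK⟩ := hdeg
  set B := 2 / m * ∫ x in Ioo (0:ℝ) 1, |x - x₀| ^ (-K)
  have hB : 0 ≤ B := by positivity
  have hweighted := fun u (hu : MemH1 u) =>
    hu.integrableOn_sq_div_and_integral_le hK hm (hW.continuousOn zero_le_one) ha_low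
  have h1C : 1 ≤ max M 1 + B := le_add_of_le_of_nonneg (le_max_right _ _) hB
  refine ⟨fun u hu => (hweighted u hu).1, max M 1 + B, h1C, fun u hu => ?_⟩
  obtain ⟨hint, hle⟩ := hweighted u hu
  have hL2 := hM u hint
  have hI₁ : 0 ≤ ∫ x in Ioo (0:ℝ) 1, u x ^ 2 := by positivity
  have hI₂ : 0 ≤ ∫ x in Ioo (0:ℝ) 1, deriv u x ^ 2 := by positivity
  have hIq : 0 ≤ ∫ x in Ioo (0:ℝ) 1, u x ^ 2 / a x :=
    setIntegral_nonneg measurableSet_Ioo fun x hx => div_nonneg (sq_nonneg _)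
      ((by positivity : 0 ≤ m * |x - x₀| ^ K).trans (ha_low x (Ioo_subset_Icc_self hx)))
  constructor
  · rw [one_div, inv_mul_le_iff₀ (zero_lt_one.trans_le h1C)]
    nlinarith [le_max_left M 1, le_max_right M 1]
  · nlinarith [le_max_right M 1]
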